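/- Let E be an entire function with E(-z) = E*(z) for all z and E(iλ)² + E*(iλ)² ≠ 0, where λ > 0. Then the function K(z) = P_λ(z)(1 - (E(z)² + E*(z)²)/(E(iλ)² + E*(iλ)²)), where P_λ(z) = λ/(π(z² + λ²)), extends to an entire function, and if E has exponential type τ then K has exponential type at most 2τ. -/

import Mathlib

open Complex

noncomputable def estar (E : ℂ → ℂ) (z : ℂ) : ℂ := (starRingEnd ℂ) (E ((starRingEnd ℂ) z))

/-- `F` has exponential type `τ`. -/
def ExpType (F : ℂ → ℂ) (τ : ℝ) : Prop :=
  ∀ ε > (0 : ℝ), ∃ C : ℝ, ∀ z : ℂ, ‖F z‖ ≤ C * Real.exp ((τ + ε) * ‖z‖)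

/-!
Put `D = E(iλ)² + E*(iλ)²` and `G = 1 - (E² + E*²)/D`. The symmetry `E(-z) = E*(z)` makes `G`
vanish at both `iλ` and `-iλ`, so dividing `G` twice by a linear factor (iterated `dslope`) gives
an entire `H` with `(z² + λ²) H = G`, and `K = (λ/π) H`. If `E` has type `τ`, then `G` has type
`2τ`; since `|z² + λ²| ≥ 1` off a disc, `K` is dominated by a multiple of `G` there and has type
`2τ` as well. Here `τ ≥ 0`: an entire function of negative type tends to `0` at infinity, hence
vanishes by Liouville, which `D ≠ 0` rules out.
-/

open Filter Topology

theorem Differentiable.estar {E : ℂ → ℂ} (hE : Differentiable ℂ E) :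
    Differentiable ℂ (estar E) :=
  fun _ ↦ differentiableAt_conj_conj_iff.mpr (hE _)

theorem Differentiable.dslope {E : Type*} [NormedAddCommGroup E] [NormedSpace ℂ E]
    [CompleteSpace E] {f : ℂ → E} (hf : Differentiable ℂ f) (c : ℂ) :
    Differentiable ℂ (dslope f c) :=
  differentiableOn_univ.mp ((Complex.differentiableOn_dslope univ_mem).mpr hf.differentiableOn)

theorem Differentiable.exists_mul_sub_mul_sub_eq {G : ℂ → ℂ} (hG : Differentiable ℂ G) {a b : ℂ}
    (hab : a ≠ b) (ha : G a = 0) (hb : G b = 0) :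
    ∃ H : ℂ → ℂ, Differentiable ℂ H ∧ ∀ z, (z - a) * (z - b) * H z = G z := by
  have hslope : _root_.dslope G a b = 0 := by
    rw [dslope_of_ne G hab.symm, slope_def_field, ha, hb, sub_zero, zero_div]
  refine ⟨_root_.dslope (_root_.dslope G a) b, (hG.dslope a).dslope b, fun z ↦ ?_⟩
  have h1 := sub_smul_dslope G a z
  have h2 := sub_smul_dslope (_root_.dslope G a) b z
  simp only [smul_eq_mul, ha, hslope, sub_zero] at h1 h2
  rw [mul_assoc, h2, h1]

theorem Differentiable.exists_sq_add_sq_mul_eq {G : ℂ → ℂ} (hG : Differentiable ℂ G) {lam : ℝ}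
    (hlam : lam ≠ 0) (hpos : G (lam * I) = 0) (hneg : G (-(lam * I)) = 0) :
    ∃ H : ℂ → ℂ, Differentiable ℂ H ∧ ∀ z, (z ^ 2 + (lam : ℂ) ^ 2) * H z = G z := by
  have hne : (lam : ℂ) * I ≠ -(lam * I) := by
    rw [Ne, self_eq_neg, mul_eq_zero, not_or]
    exact ⟨ofReal_ne_zero.mpr hlam, I_ne_zero⟩
  obtain ⟨H, hH, hGH⟩ := hG.exists_mul_sub_mul_sub_eq hne hpos hneg
  refine ⟨H, hH, fun z ↦ ?_⟩
  rw [← hGH]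
  linear_combination ((lam : ℂ) ^ 2 * H z) * I_sq

theorem one_le_norm_sq_add {c z : ℂ} (hz : ‖c‖ + 1 ≤ ‖z‖) : 1 ≤ ‖z ^ 2 + c‖ := by
  have h1 : 1 ≤ ‖z‖ := by linarith [norm_nonneg c]
  have h2 : ‖z‖ ^ 2 ≤ ‖z ^ 2 + c‖ + ‖c‖ := by
    rw [← norm_pow]; exact norm_le_add_norm_add (z ^ 2) c
  nlinarith

namespace ExpType

variable {F G : ℂ → ℂ} {σ τ : ℝ}

theorem bound_nonneg {C ε : ℝ} (h : ∀ z : ℂ, ‖F z‖ ≤ C * Real.exp ((τ + ε) * ‖z‖)) : 0 ≤ C := by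
  simpa using (norm_nonneg _).trans (h 0)

theorem mono (hF : ExpType F σ) (hστ : σ ≤ τ) : ExpType F τ := by
  intro ε hε
  obtain ⟨C, hC⟩ := hF ε hε
  refine ⟨C, fun z ↦ (hC z).trans ?_⟩
  gcongr
  exact bound_nonneg hC

theorem const (c : ℂ) : ExpType (fun _ ↦ c) 0 :=
  fun _ _ ↦ ⟨‖c‖, fun z ↦ le_mul_of_one_le_right (norm_nonneg c) (Real.one_le_exp (by positivity))⟩

theorem add (hF : ExpType F τ) (hG : ExpType G τ) : ExpType (fun z ↦ F z + G z) τ := by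
  intro ε hε
  obtain ⟨C₁, hC₁⟩ := hF ε hε
  obtain ⟨C₂, hC₂⟩ := hG ε hε
  exact ⟨C₁ + C₂, fun z ↦ (norm_add_le _ _).trans (by linarith [hC₁ z, hC₂ z])⟩

theorem neg (hF : ExpType F τ) : ExpType (fun z ↦ -F z) τ := by
  simpa only [ExpType, norm_neg] using hF

theorem sub (hF : ExpType F τ) (hG : ExpType G τ) : ExpType (fun z ↦ F z - G z) τ := by
  simpa only [sub_eq_add_neg] using hF.add hG.neg

theorem mul (hF : ExpType F σ) (hG : ExpType G τ) : ExpType (fun z ↦ F z * G z) (σ + τ) := by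
  intro ε hε
  obtain ⟨C₁, hC₁⟩ := hF (ε / 2) (by positivity)
  obtain ⟨C₂, hC₂⟩ := hG (ε / 2) (by positivity)
  refine ⟨C₁ * C₂, fun z ↦ ?_⟩
  calc ‖F z * G z‖ = ‖F z‖ * ‖G z‖ := norm_mul _ _
    _ ≤ C₁ * Real.exp ((σ + ε / 2) * ‖z‖) * (C₂ * Real.exp ((τ + ε / 2) * ‖z‖)) :=
      mul_le_mul (hC₁ z) (hC₂ z) (norm_nonneg _)
        (mul_nonneg (bound_nonneg hC₁) (Real.exp_pos _).le)
    _ = C₁ * C₂ * Real.exp ((σ + τ + ε) * ‖z‖) := by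
      rw [mul_mul_mul_comm, ← Real.exp_add]; ring_nf

theorem pow (hF : ExpType F τ) (n : ℕ) : ExpType (fun z ↦ F z ^ n) (n * τ) := by
  induction n with
  | zero => simpa using const 1
  | succ n ih => simpa only [pow_succ, Nat.cast_succ, add_one_mul] using ih.mul hF

theorem div_const (hF : ExpType F τ) (c : ℂ) : ExpType (fun z ↦ F z / c) τ := by
  simpa only [div_eq_mul_inv, add_zero] using hF.mul (const c⁻¹)

theorem estar (hF : ExpType F τ) : ExpType (_root_.estar F) τ := by
  intro ε hε
  obtain ⟨C, hC⟩ := hF ε hε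
  refine ⟨C, fun z ↦ ?_⟩
  simpa only [_root_.estar, RCLike.norm_conj] using hC (starRingEnd ℂ z)

theorem nonneg (hF : ExpType F τ) (hdiff : Differentiable ℂ F) (hF0 : F ≠ 0) : 0 ≤ τ := by
  by_contra! hτ
  obtain ⟨C, hC⟩ := hF (-τ / 2) (by linarith)
  have hdecay : Tendsto (fun z : ℂ ↦ C * Real.exp ((τ + -τ / 2) * ‖z‖)) (cocompact ℂ) (𝓝 0) := by
    simpa using ((Real.tendsto_exp_atBot.comp
      (tendsto_norm_cocompact_atTop.const_mul_atTop_of_neg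
        (by linarith : τ + -τ / 2 < 0))).const_mul C)
  exact hF0 (hdiff.eq_const_of_tendsto_cocompact (squeeze_zero_norm hC hdecay))

theorem of_norm_le_mul (hG : ExpType G τ) (hF : Continuous F) {R c : ℝ} (hc : 0 ≤ c)
    (hFG : ∀ z, R ≤ ‖z‖ → ‖F z‖ ≤ c * ‖G z‖) : ExpType F τ := by
  intro ε hε
  obtain ⟨C, hC⟩ := hG ε hε
  obtain ⟨M, hM⟩ := (isCompact_closedBall (0 : ℂ) R).exists_bound_of_continuousOn hF.continuousOn
  -- `τ + ε` may be negative, so the bound `M` on the disc is scaled up by `exp (|τ + ε| R)`.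
  refine ⟨max (M * Real.exp (|τ + ε| * R)) (c * C), fun z ↦ ?_⟩
  rcases le_or_gt R ‖z‖ with hz | hz
  · calc ‖F z‖ ≤ c * (C * Real.exp ((τ + ε) * ‖z‖)) := (hFG z hz).trans (by gcongr; exact hC z)
      _ ≤ _ := by rw [← mul_assoc]; gcongr; exacts [le_max_right _ _]
  · have hFz : ‖F z‖ ≤ M := hM z (mem_closedBall_zero_iff.mpr hz.le)
    have hM0 : 0 ≤ M := (norm_nonneg _).trans hFz
    have hexp : 1 ≤ Real.exp (|τ + ε| * R) * Real.exp ((τ + ε) * ‖z‖) := by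
      rw [← Real.exp_add]
      refine Real.one_le_exp ?_
      nlinarith [neg_abs_le (τ + ε), abs_nonneg (τ + ε), norm_nonneg z]
    calc ‖F z‖ ≤ M * (Real.exp (|τ + ε| * R) * Real.exp ((τ + ε) * ‖z‖)) :=
          hFz.trans (le_mul_of_one_le_right hM0 hexp)
      _ ≤ _ := by rw [← mul_assoc]; gcongr; exact le_max_left _ _

theorem of_sq_add_mul_eq (hG : ExpType G τ) (hF : Continuous F) (c : ℂ)
    (hFG : ∀ z, (z ^ 2 + c) * F z = G z) : ExpType F τ :=
  hG.of_norm_le_mul hF zero_le_one (R := ‖c‖ + 1) fun z hz ↦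
    calc ‖F z‖ ≤ ‖z ^ 2 + c‖ * ‖F z‖ :=
          le_mul_of_one_le_left (norm_nonneg _) (one_le_norm_sq_add hz)
      _ = 1 * ‖G z‖ := by rw [← norm_mul, hFG, one_mul]

end ExpType

/-- The function `K(z) = P_lam(z)(1 - (E² + E*²)/(E(i lam)² + E*(i lam)²))`
extends to an entire function of exponential type at most `2τ` when `E` has
exponential type `τ`. -/
theorem poisson_interpolation_entire
    (lam : ℝ) (hlam : 0 < lam)
    (E : ℂ → ℂ) (hE : Differentiable ℂ E)
    (hsym : ∀ z : ℂ, E (-z) = estar E z)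
    (hden : E (lam * Complex.I) ^ 2 + estar E (lam * Complex.I) ^ 2 ≠ 0) :
    ∃ K : ℂ → ℂ, Differentiable ℂ K ∧
      (∀ z : ℂ, z ^ 2 + (lam : ℂ) ^ 2 ≠ 0 →
        K z = (lam : ℂ) / (Real.pi * (z ^ 2 + (lam : ℂ) ^ 2)) *
          (1 - (E z ^ 2 + estar E z ^ 2) /
            (E (lam * Complex.I) ^ 2 + estar E (lam * Complex.I) ^ 2))) ∧
      (∀ τ : ℝ, ExpType E τ → ExpType K (2 * τ)) := by
  set a : ℂ := lam * I
  set D := E a ^ 2 + estar E a ^ 2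
  set G : ℂ → ℂ := fun z ↦ 1 - (E z ^ 2 + estar E z ^ 2) / D
  have hGa : G a = 0 := by
    change 1 - D / D = 0
    rw [div_self hden, sub_self]
  have hGna : G (-a) = 0 := by
    have hEstar_neg : estar E (-a) = E a := by simpa using (hsym (-a)).symm
    change 1 - (E (-a) ^ 2 + estar E (-a) ^ 2) / D = 0
    rw [hsym, hEstar_neg, add_comm]
    exact hGa
  have hG : Differentiable ℂ G :=
    (differentiable_const 1).sub (((hE.pow 2).add (hE.estar.pow 2)).div_const D)
  obtain ⟨H, hH, hGH⟩ := hG.exists_sq_add_sq_mul_eq hlam.ne' hGa hGna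
  refine ⟨fun z ↦ lam / Real.pi * H z, hH.const_mul _, fun z hz ↦ ?_, fun τ hτ ↦ ?_⟩
  · change lam / Real.pi * H z = lam / (Real.pi * (z ^ 2 + lam ^ 2)) * G z
    rw [← hGH]
    field_simp
  have hτ0 : 0 ≤ τ := hτ.nonneg hE fun hE0 ↦ hden (by simp [D, hE0, estar])
  have hGτ : ExpType G (2 * τ) :=
    ((ExpType.const 1).mono (by positivity)).sub
      (by simpa using ((hτ.pow 2).add (hτ.estar.pow 2)).div_const D)
  simpa using (ExpType.const _).mul (hGτ.of_sq_add_mul_eq hH.continuous _ hGH)
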